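/- arXiv:1411.2309 — 2 statements merged into one kernel-verified Lean document; each statement's English description precedes it below -/
import Mathlib

section
/- In the AR(1) conditional Poisson model with μ_t = y_{t-1}((t-1)α+1)^β/(tα+1)^β, the conditional Fisher information for α given y_0 equals I_{αα} = β² y_0 Σ_{t=1}^T ((t-1)α+1)^{-2}/(tα+1)^{β+2}. -/
open MeasureTheory ProbabilityTheory Real

noncomputable def c1 (β τ a : ℝ) : ℝ :=
  ((τ-1) * β * ((τ-1)*a+1) ^ (β-1)) * ((τ*a+1) ^ (-β))
    + ((τ-1)*a+1) ^ β * (τ * -β * (τ*a+1) ^ (-β-1))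

noncomputable def c2 (β τ α : ℝ) : ℝ :=
  ((τ-1) * β * ((τ-1) * (β-1) * ((τ-1)*α+1) ^ (β-1-1)) * ((τ*α+1) ^ (-β))
    + ((τ-1) * β * ((τ-1)*α+1) ^ (β-1)) * (τ * -β * (τ*α+1) ^ (-β-1)))
  + (((τ-1) * β * ((τ-1)*α+1) ^ (β-1)) * (τ * -β * (τ*α+1) ^ (-β-1))
    + ((τ-1)*α+1) ^ β * (τ * -β * (τ * (-β-1) * (τ*α+1) ^ (-β-1-1))))

noncomputable def Dt (α β τ m2 m1 : ℝ) : ℝ :=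
  m2 * (β * ((0 * ((τ-1)*α+1) - (τ-1)*(τ-1)) / ((τ-1)*α+1) ^ 2)
        - β * ((0 * (τ*α+1) - τ * τ) / (τ*α+1) ^ 2))
    - m1 * c2 β τ α

lemma hP (τ a : ℝ) : HasDerivAt (fun a' => (τ-1)*a'+1) (τ-1) a := by
  simpa using ((hasDerivAt_id a).const_mul (τ-1)).add_const 1

lemma hQ (τ a : ℝ) : HasDerivAt (fun a' => τ*a'+1) τ a := by
  simpa using ((hasDerivAt_id a).const_mul τ).add_const 1

lemma Ppos {τ a : ℝ} (hτ : 1 ≤ τ) (ha : 0 < a) : 0 < (τ-1)*a+1 := by nlinarith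
lemma Qpos {τ a : ℝ} (hτ : 1 ≤ τ) (ha : 0 < a) : 0 < τ*a+1 := by nlinarith

lemma term1_hasDerivAt (β τ : ℝ) (hτ : 1 ≤ τ) (m2 m1 L : ℝ) (hm1 : 0 ≤ m1)
    (a : ℝ) (ha : 0 < a) :
    HasDerivAt (fun a' => m2 * Real.log (m1 * ((τ-1)*a'+1) ^ β / (τ*a'+1) ^ β)
        - m1 * ((τ-1)*a'+1) ^ β / (τ*a'+1) ^ β - L)
      (if m1 = 0 then 0 else
        m2 * (β * ((τ-1)/((τ-1)*a+1)) - β * (τ/(τ*a+1))) - m1 * c1 β τ a) a := by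
  by_cases h : m1 = 0
  · rw [if_pos h]
    have : (fun a' => m2 * Real.log (m1 * ((τ-1)*a'+1) ^ β / (τ*a'+1) ^ β)
        - m1 * ((τ-1)*a'+1) ^ β / (τ*a'+1) ^ β - L) = fun _ => -L := by
      funext x; simp [h]
    rw [this]
    exact hasDerivAt_const a _
  · rw [if_neg h]
    have hm1' : 0 < m1 := lt_of_le_of_ne hm1 (Ne.symm h)
    -- the nice version of the function on Ioi 0
    have heq : (fun a' => m2 * Real.log (m1 * ((τ-1)*a'+1) ^ β / (τ*a'+1) ^ β)
        - m1 * ((τ-1)*a'+1) ^ β / (τ*a'+1) ^ β - L)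
        =ᶠ[nhds a] (fun a' => m2 * (Real.log m1 + (β * Real.log ((τ-1)*a'+1) - β * Real.log (τ*a'+1)))
          - m1 * (((τ-1)*a'+1) ^ β * (τ*a'+1) ^ (-β)) - L) := by
      filter_upwards [isOpen_Ioi.mem_nhds (show a ∈ Set.Ioi (0:ℝ) from ha)] with x hx
      have hp := Ppos hτ hx
      have hq := Qpos hτ hx
      rw [Real.log_div (by positivity) (by positivity), Real.log_mul (by positivity) (by positivity),
        Real.log_rpow hp, Real.log_rpow hq, Real.rpow_neg hq.le]
      ring
    have hPl : HasDerivAt (fun a' => Real.log ((τ-1)*a'+1)) ((τ-1)/((τ-1)*a+1)) a :=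
      (hP τ a).log (Ppos hτ ha).ne'
    have hQl : HasDerivAt (fun a' => Real.log (τ*a'+1)) (τ/(τ*a+1)) a :=
      (hQ τ a).log (Qpos hτ ha).ne'
    have hc : HasDerivAt (fun a' => ((τ-1)*a'+1) ^ β * (τ*a'+1) ^ (-β)) (c1 β τ a) a := by
      exact ((hP τ a).rpow_const (Or.inl (Ppos hτ ha).ne')).mul
        ((hQ τ a).rpow_const (Or.inl (Qpos hτ ha).ne'))
    have : HasDerivAt (fun a' => m2 * (Real.log m1 + (β * Real.log ((τ-1)*a'+1) - β * Real.log (τ*a'+1)))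
          - m1 * (((τ-1)*a'+1) ^ β * (τ*a'+1) ^ (-β)) - L)
        (m2 * (β * ((τ-1)/((τ-1)*a+1)) - β * (τ/(τ*a+1))) - m1 * c1 β τ a) a := by
      exact ((((hPl.const_mul β).sub (hQl.const_mul β)).const_add (Real.log m1)).const_mul m2 |>.sub
        (hc.const_mul m1)).sub_const L
    exact this.congr_of_eventuallyEq heq

lemma term2_hasDerivAt (β τ : ℝ) (hτ : 1 ≤ τ) (m2 m1 : ℝ) (α : ℝ) (hα : 0 < α) :
    HasDerivAt (fun a => if m1 = 0 then (0:ℝ) else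
        m2 * (β * ((τ-1)/((τ-1)*a+1)) - β * (τ/(τ*a+1))) - m1 * c1 β τ a)
      (if m1 = 0 then 0 else Dt α β τ m2 m1) α := by
  by_cases h : m1 = 0
  · simp only [if_pos h]
    exact hasDerivAt_const α 0
  · simp only [if_neg h]
    unfold Dt c1 c2
    have hp := Ppos hτ hα
    have hq := Qpos hτ hα
    have h1 : HasDerivAt (fun a => (τ-1)/((τ-1)*a+1))
        ((0 * ((τ-1)*α+1) - (τ-1)*(τ-1)) / ((τ-1)*α+1) ^ 2) α :=
      (hasDerivAt_const α (τ-1)).div (hP τ α) hp.ne'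
    have h2 : HasDerivAt (fun a => τ/(τ*a+1))
        ((0 * (τ*α+1) - τ * τ) / (τ*α+1) ^ 2) α :=
      (hasDerivAt_const α τ).div (hQ τ α) hq.ne'
    have hc2 : HasDerivAt (fun a => c1 β τ a)
        (((τ-1) * β * ((τ-1) * (β-1) * ((τ-1)*α+1) ^ (β-1-1)) * ((τ*α+1) ^ (-β))
            + ((τ-1) * β * ((τ-1)*α+1) ^ (β-1)) * (τ * -β * (τ*α+1) ^ (-β-1)))
          + (((τ-1) * β * ((τ-1)*α+1) ^ (β-1)) * (τ * -β * (τ*α+1) ^ (-β-1))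
            + ((τ-1)*α+1) ^ β * (τ * -β * (τ * (-β-1) * (τ*α+1) ^ (-β-1-1))))) α := by
      unfold c1
      exact ((((hP τ α).rpow_const (Or.inl hp.ne')).const_mul ((τ-1) * β)).mul
          ((hQ τ α).rpow_const (Or.inl hq.ne'))).add
        ((((hP τ α).rpow_const (Or.inl hp.ne')).mul
          (((hQ τ α).rpow_const (Or.inl hq.ne')).const_mul (τ * -β))))
    exact (((h1.const_mul β).sub (h2.const_mul β)).const_mul m2).sub (hc2.const_mul m1)
lemma deriv_deriv_eq (α β : ℝ) (hα : 0 < α) (T : ℕ) (n : ℕ → ℕ) :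
    deriv (fun a => deriv (fun a' => ∑ t ∈ Finset.Icc 1 T,
      ((n t : ℝ) * Real.log ((n (t-1) : ℝ) * (((t:ℝ)-1) * a' + 1) ^ β / ((t:ℝ) * a' + 1) ^ β)
        - (n (t-1) : ℝ) * (((t:ℝ)-1) * a' + 1) ^ β / ((t:ℝ) * a' + 1) ^ β
        - Real.log (Nat.factorial (n t)))) a) α
    = ∑ t ∈ Finset.Icc 1 T, (if (n (t-1) : ℝ) = 0 then 0
        else Dt α β (t:ℝ) (n t : ℝ) (n (t-1) : ℝ)) := by
  have key : ∀ a ∈ Set.Ioi (0:ℝ), HasDerivAt (fun a' => ∑ t ∈ Finset.Icc 1 T,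
      ((n t : ℝ) * Real.log ((n (t-1) : ℝ) * (((t:ℝ)-1) * a' + 1) ^ β / ((t:ℝ) * a' + 1) ^ β)
        - (n (t-1) : ℝ) * (((t:ℝ)-1) * a' + 1) ^ β / ((t:ℝ) * a' + 1) ^ β
        - Real.log (Nat.factorial (n t))))
      (∑ t ∈ Finset.Icc 1 T, (if (n (t-1):ℝ) = 0 then 0 else
        (n t : ℝ) * (β * (((t:ℝ)-1)/(((t:ℝ)-1)*a+1)) - β * ((t:ℝ)/((t:ℝ)*a+1)))
          - (n (t-1):ℝ) * c1 β (t:ℝ) a)) a := by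
    intro a ha
    apply HasDerivAt.fun_sum
    intro t ht
    have hτ : (1:ℝ) ≤ (t:ℝ) := by exact_mod_cast (Finset.mem_Icc.mp ht).1
    exact term1_hasDerivAt β (t:ℝ) hτ _ _ _ (Nat.cast_nonneg _) a ha
  have h1 : (fun a => deriv (fun a' => ∑ t ∈ Finset.Icc 1 T,
      ((n t : ℝ) * Real.log ((n (t-1) : ℝ) * (((t:ℝ)-1) * a' + 1) ^ β / ((t:ℝ) * a' + 1) ^ β)
        - (n (t-1) : ℝ) * (((t:ℝ)-1) * a' + 1) ^ β / ((t:ℝ) * a' + 1) ^ β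
        - Real.log (Nat.factorial (n t)))) a)
      =ᶠ[nhds α] (fun a => ∑ t ∈ Finset.Icc 1 T, (if (n (t-1):ℝ) = 0 then 0 else
        (n t : ℝ) * (β * (((t:ℝ)-1)/(((t:ℝ)-1)*a+1)) - β * ((t:ℝ)/((t:ℝ)*a+1)))
          - (n (t-1):ℝ) * c1 β (t:ℝ) a)) := by
    filter_upwards [isOpen_Ioi.mem_nhds (show α ∈ Set.Ioi (0:ℝ) from hα)] with a ha
    exact (key a ha).deriv
  rw [h1.deriv_eq]
  refine HasDerivAt.deriv ?_
  apply HasDerivAt.fun_sum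
  intro t ht
  have hτ : (1:ℝ) ≤ (t:ℝ) := by exact_mod_cast (Finset.mem_Icc.mp ht).1
  exact term2_hasDerivAt β (t:ℝ) hτ _ _ α hα

set_option maxHeartbeats 2000000 in
lemma algebra_key (α β : ℝ) (hα : 0 < α) (hβ : 0 < β) (y₀ : ℝ) (τ : ℝ) (hτ : 1 ≤ τ) :
    -((β * ((0 * ((τ-1)*α+1) - (τ-1)*(τ-1)) / ((τ-1)*α+1)^2)
       - β * ((0 * (τ*α+1) - τ*τ) / (τ*α+1)^2)) * (y₀ / (τ*α+1) ^ β)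
      - c2 β τ α * (y₀ / ((τ-1)*α+1) ^ β))
    = β^2 * y₀ * (((τ-1)*α+1) ^ (-(2:ℝ)) / (τ*α+1) ^ (β+2)) := by
  have hu2 : ((τ-1)*α+1:ℝ) ^ β ≠ 0 := by
    have hp : (0:ℝ) < (τ-1)*α+1 := Ppos hτ hα
    positivity
  have hp : (0:ℝ) < (τ-1)*α+1 := Ppos hτ hα
  have hq : (0:ℝ) < τ*α+1 := Qpos hτ hα
  have e2 : ∀ x : ℝ, 0 < x → x ^ (2:ℝ) = x^2 := by
    intro x hx
    rw [show (2:ℝ) = ((2:ℕ):ℝ) by norm_num, Real.rpow_natCast]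
  unfold c2
  rw [Real.rpow_sub hp (β-1) 1, Real.rpow_sub hp β 1,
    Real.rpow_sub hq (-β-1) 1, Real.rpow_sub hq (-β) 1, Real.rpow_neg hq.le β,
    Real.rpow_neg hp.le (2:ℝ), e2 _ hp, Real.rpow_add hq β 2, e2 _ hq, Real.rpow_one]
  have hu : ((τ-1)*α+1:ℝ) ^ β ≠ 0 := by positivity
  have hv : (τ*α+1:ℝ) ^ β ≠ 0 := by positivity
  generalize ((τ-1)*α+1:ℝ) ^ β = u at hu ⊢
  generalize (τ*α+1:ℝ) ^ β = v at hv ⊢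
  simp only [Real.rpow_one]
  field_simp
  ring

lemma null_lemma {Ω : Type*} [MeasurableSpace Ω] (P : Measure Ω)
    (α β : ℝ) (T : ℕ) (Y : ℕ → Ω → ℕ)
    (hdist : ∀ t, 1 ≤ t → t ≤ T → ∀ y : ℕ → ℕ,
      P {ω | Y t ω = y t ∧ ∀ u < t, Y u ω = y u}
        = ENNReal.ofReal (Real.exp (-((y (t-1) : ℝ) * (((t : ℝ) - 1) * α + 1) ^ β / ((t : ℝ) * α + 1) ^ β))
            * ((y (t-1) : ℝ) * (((t : ℝ) - 1) * α + 1) ^ β / ((t : ℝ) * α + 1) ^ β) ^ (y t)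
            / Nat.factorial (y t))
          * P {ω | ∀ u < t, Y u ω = y u})
    (t : ℕ) (ht1 : 1 ≤ t) (htT : t ≤ T) :
    P {ω | Y t ω ≠ 0 ∧ Y (t-1) ω = 0} = 0 := by
  have hsub : {ω | Y t ω ≠ 0 ∧ Y (t-1) ω = 0} ⊆
      ⋃ (v : Fin (t+1) → ℕ), ({ω | ∀ u : Fin (t+1), Y u ω = v u} ∩ {ω | Y t ω ≠ 0 ∧ Y (t-1) ω = 0}) := by
    intro ω hω
    exact Set.mem_iUnion.2 ⟨fun u => Y u ω, ⟨fun u => rfl, hω⟩⟩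
  refine measure_mono_null hsub (measure_iUnion_null fun v => ?_)
  rcases Set.eq_empty_or_nonempty
    ({ω | ∀ u : Fin (t+1), Y u ω = v u} ∩ {ω | Y t ω ≠ 0 ∧ Y (t-1) ω = 0}) with he | ⟨ω₀, hω₀⟩
  · simp [he]
  · refine measure_mono_null Set.inter_subset_left ?_
    set y : ℕ → ℕ := fun u => if h : u < t+1 then v ⟨u, h⟩ else 0 with hy
    have hAv : {ω | ∀ u : Fin (t+1), Y u ω = v u}
        = {ω | Y t ω = y t ∧ ∀ u < t, Y u ω = y u} := by
      ext ω
      constructor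
      · intro h
        refine ⟨?_, fun u hu => ?_⟩
        · simpa [hy, Nat.lt_succ_self] using h ⟨t, Nat.lt_succ_self t⟩
        · simpa [hy, hu.le] using h ⟨u, hu.trans (Nat.lt_succ_self t)⟩
      · intro ⟨h1, h2⟩ u
        rcases Nat.lt_succ_iff_lt_or_eq.mp u.isLt with hu | hu
        · have := h2 u.val hu
          simpa [hy, Nat.lt_succ_iff.mp u.isLt] using this
        · have : (u : ℕ) = t := hu
          have h1' := h1
          simp only [hy] at h1'
          rw [dif_pos (Nat.lt_succ_self t)] at h1'
          have : Y u ω = Y t ω := by rw [this]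
          rw [this, h1']
          congr 1
          exact Fin.ext hu.symm
      -- goal: v ⟨t, _⟩ = v u
  -- continue
    rw [hAv, hdist t ht1 htT y]
    have hyt1 : y (t-1) = 0 := by
      have h1 : t - 1 < t + 1 := by omega
      have := hω₀.2.2
      simp only [hy]
      rw [dif_pos h1]
      have := hω₀.1 ⟨t-1, h1⟩
      rw [← this]
      exact hω₀.2.2
    have hyt : y t ≠ 0 := by
      have h1 : t < t + 1 := Nat.lt_succ_self t
      simp only [hy]
      rw [dif_pos h1]
      have := hω₀.1 ⟨t, h1⟩
      rw [← this]
      exact hω₀.2.1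
    rw [hyt1]
    push_cast
    rw [zero_mul, zero_div, zero_pow hyt]
    simp

/-- Conditional Fisher information for the AR(1) conditional Poisson model:
given `y₀`, `y t | y (t-1) ~ Poisson(y (t-1) · ((t-1)α+1)^β/(tα+1)^β)` for
`t = 1,…,T`; the conditional means satisfy `E[y t | y₀] = y₀/(tα+1)^β`. -/
theorem stmt_10
    (α β : ℝ) (hα : 0 < α) (hβ : 0 < β) (y₀ : ℕ) (T : ℕ)
    (Ω : Type*) [MeasurableSpace Ω] (P : Measure Ω) [IsProbabilityMeasure P]
    (Y : ℕ → Ω → ℕ) (hY : ∀ t, Measurable (Y t))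
    (hY0 : ∀ ω, Y 0 ω = y₀)
    (hdist : ∀ t, 1 ≤ t → t ≤ T → ∀ y : ℕ → ℕ,
      P {ω | Y t ω = y t ∧ ∀ u < t, Y u ω = y u}
        = ENNReal.ofReal (Real.exp (-((y (t-1) : ℝ) * (((t : ℝ) - 1) * α + 1) ^ β / ((t : ℝ) * α + 1) ^ β))
            * ((y (t-1) : ℝ) * (((t : ℝ) - 1) * α + 1) ^ β / ((t : ℝ) * α + 1) ^ β) ^ (y t)
            / Nat.factorial (y t))
          * P {ω | ∀ u < t, Y u ω = y u})
    (hmean : ∀ t, 1 ≤ t → t ≤ T →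
      ∫ ω, (Y t ω : ℝ) ∂P = (y₀ : ℝ) / ((t : ℝ) * α + 1) ^ β)
    (l : ℝ → ℝ → Ω → ℝ)
    (hl : ∀ a b ω, l a b ω =
      ∑ t ∈ Finset.Icc 1 T,
        ((Y t ω : ℝ) * Real.log ((Y (t-1) ω : ℝ) * (((t : ℝ) - 1) * a + 1) ^ b / ((t : ℝ) * a + 1) ^ b)
          - (Y (t-1) ω : ℝ) * (((t : ℝ) - 1) * a + 1) ^ b / ((t : ℝ) * a + 1) ^ b
          - Real.log (Nat.factorial (Y t ω))))
    (hInt : Integrable (fun ω => deriv (fun a => deriv (fun a' => l a' β ω) a) α) P) :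
    (∫ ω, -(deriv (fun a => deriv (fun a' => l a' β ω) a) α) ∂P = β ^ 2 * (y₀ : ℝ) * ∑ t ∈ Finset.Icc 1 T,
          (((t : ℝ) - 1) * α + 1) ^ (-(2 : ℝ)) / ((t : ℝ) * α + 1) ^ (β + 2)) := by
  -- pointwise second derivative
  have hdd : ∀ ω, deriv (fun a => deriv (fun a' => l a' β ω) a) α
      = ∑ t ∈ Finset.Icc 1 T, (if (Y (t-1) ω : ℝ) = 0 then 0
          else Dt α β (t:ℝ) (Y t ω : ℝ) (Y (t-1) ω : ℝ)) := by
    intro ω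
    have hfun : (fun a' : ℝ => l a' β ω) = (fun a' => ∑ t ∈ Finset.Icc 1 T,
        ((Y t ω : ℝ) * Real.log ((Y (t-1) ω : ℝ) * (((t:ℝ)-1) * a' + 1) ^ β / ((t:ℝ) * a' + 1) ^ β)
          - (Y (t-1) ω : ℝ) * (((t:ℝ)-1) * a' + 1) ^ β / ((t:ℝ) * a' + 1) ^ β
          - Real.log (Nat.factorial (Y t ω)))) := funext fun a' => hl a' β ω
    rw [hfun]
    exact deriv_deriv_eq α β hα T (fun u => Y u ω)
  by_cases hy0 : y₀ = 0
  · -- degenerate case: everything is a.s. zero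
    have hz : ∀ t, t ≤ T → ∀ᵐ ω ∂P, Y t ω = 0 := by
      intro t
      induction t with
      | zero => exact fun _ => Filter.Eventually.of_forall fun ω => by rw [hY0 ω, hy0]
      | succ k ih =>
        intro hkT
        have h1 := ih (by omega)
        have h2 := null_lemma P α β T Y hdist (k+1) (by omega) hkT
        have h2' : ∀ᵐ ω ∂P, ¬(Y (k+1) ω ≠ 0 ∧ Y k ω = 0) := by
          rw [ae_iff]
          simpa using h2
        filter_upwards [h1, h2'] with ω hω1 hω2
        by_contra hne
        exact hω2 ⟨hne, hω1⟩
    have hzz : ∀ᵐ ω ∂P, ∀ t ∈ Finset.Icc 1 T, Y (t-1) ω = 0 := by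
      rw [Filter.eventually_all_finset]
      intro t ht
      exact hz (t-1) (by have := (Finset.mem_Icc.mp ht).2; omega)
    have : β ^ 2 * (y₀ : ℝ) * ∑ t ∈ Finset.Icc 1 T,
        (((t : ℝ) - 1) * α + 1) ^ (-(2 : ℝ)) / ((t : ℝ) * α + 1) ^ (β + 2) = 0 := by
      simp [hy0]
    rw [this]
    refine integral_eq_zero_of_ae ?_
    filter_upwards [hzz] with ω hω
    rw [Pi.zero_apply, hdd ω, Finset.sum_eq_zero, neg_zero]
    intro t ht
    rw [if_pos (by exact_mod_cast hω t ht)]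
  · -- main case
    have hE : ∀ t, t ≤ T → ∫ ω, (Y t ω : ℝ) ∂P = (y₀ : ℝ) / ((t:ℝ) * α + 1) ^ β := by
      intro t htT
      rcases Nat.eq_zero_or_pos t with h0 | hpos
      · subst h0
        have : (fun ω => ((Y 0 ω : ℕ) : ℝ)) = fun _ => (y₀ : ℝ) := funext fun ω => by rw [hY0 ω]
        rw [this]
        simp
      · exact hmean t hpos htT
    have hI : ∀ t, t ≤ T → Integrable (fun ω => (Y t ω : ℝ)) P := by
      intro t htT
      rcases Nat.eq_zero_or_pos t with h0 | hpos
      · subst h0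
        have : (fun ω => ((Y 0 ω : ℕ) : ℝ)) = fun _ => (y₀ : ℝ) := funext fun ω => by rw [hY0 ω]
        rw [this]
        exact integrable_const _
      · by_contra h
        have h1 := integral_undef h
        rw [hE t htT] at h1
        have hq : (0:ℝ) < ((t:ℝ) * α + 1) ^ β := by positivity
        exact (div_ne_zero (Nat.cast_ne_zero.mpr hy0) hq.ne') h1
    have hrw : (fun ω => -(deriv (fun a => deriv (fun a' => l a' β ω) a) α))
        = fun ω => ∑ t ∈ Finset.Icc 1 T, -(if (Y (t-1) ω : ℝ) = 0 then 0
          else Dt α β (t:ℝ) (Y t ω : ℝ) (Y (t-1) ω : ℝ)) := by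
      funext ω
      rw [hdd ω, Finset.sum_neg_distrib]
    have hintt : ∀ t ∈ Finset.Icc 1 T, Integrable (fun ω => -(if (Y (t-1) ω : ℝ) = 0 then 0
        else Dt α β (t:ℝ) (Y t ω : ℝ) (Y (t-1) ω : ℝ))) P := by
      intro t ht
      obtain ⟨ht1, htT⟩ := Finset.mem_Icc.mp ht
      have hDt : Integrable (fun ω => Dt α β (t:ℝ) (Y t ω : ℝ) (Y (t-1) ω : ℝ)) P := by
        unfold Dt
        exact ((hI t htT).mul_const _).sub ((hI (t-1) (by omega)).mul_const _)
      have heq : (fun ω => (if (Y (t-1) ω : ℝ) = 0 then (0:ℝ)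
          else Dt α β (t:ℝ) (Y t ω : ℝ) (Y (t-1) ω : ℝ)))
          = fun ω => (if (Y (t-1) ω : ℝ) = 0 then (0:ℝ) else 1)
              * Dt α β (t:ℝ) (Y t ω : ℝ) (Y (t-1) ω : ℝ) := by
        funext ω
        by_cases h : (Y (t-1) ω : ℝ) = 0 <;> simp [h]
      refine Integrable.neg ?_
      rw [heq]
      refine hDt.bdd_mul (c := 1) ?_ (Filter.Eventually.of_forall fun ω => ?_)
      · refine Measurable.aestronglyMeasurable ?_
        exact (measurable_from_top (f := fun k : ℕ => if (k:ℝ) = 0 then (0:ℝ) else 1)).comp (hY (t-1))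
      · by_cases h : (Y (t-1) ω : ℝ) = 0 <;> simp [h]
    rw [hrw, integral_finset_sum _ hintt, Finset.mul_sum]
    refine Finset.sum_congr rfl fun t ht => ?_
    obtain ⟨ht1, htT⟩ := Finset.mem_Icc.mp ht
    rw [integral_neg]
    have hae : (fun ω => (if (Y (t-1) ω : ℝ) = 0 then (0:ℝ)
        else Dt α β (t:ℝ) (Y t ω : ℝ) (Y (t-1) ω : ℝ)))
        =ᵐ[P] (fun ω => Dt α β (t:ℝ) (Y t ω : ℝ) (Y (t-1) ω : ℝ)) := by
      rw [Filter.EventuallyEq, ae_iff]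
      refine measure_mono_null ?_ (null_lemma P α β T Y hdist t ht1 htT)
      intro ω hω
      simp only [Set.mem_setOf_eq] at hω ⊢
      by_cases h0 : (Y (t-1) ω : ℝ) = 0
      · refine ⟨?_, Nat.cast_eq_zero.mp h0⟩
        intro hYt
        apply hω
        rw [if_pos h0, h0, hYt]
        simp [Dt]
      · exact absurd (if_neg h0) hω
    rw [integral_congr_ae hae]
    have hsplit : ∫ ω, Dt α β (t:ℝ) (Y t ω : ℝ) (Y (t-1) ω : ℝ) ∂P
        = (∫ ω, (Y t ω : ℝ) ∂P) * (β * ((0 * (((t:ℝ)-1)*α+1) - ((t:ℝ)-1)*((t:ℝ)-1)) / (((t:ℝ)-1)*α+1) ^ 2)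
            - β * ((0 * ((t:ℝ)*α+1) - (t:ℝ) * (t:ℝ)) / ((t:ℝ)*α+1) ^ 2))
          - (∫ ω, (Y (t-1) ω : ℝ) ∂P) * c2 β (t:ℝ) α := by
      unfold Dt
      rw [integral_sub ((hI t htT).mul_const _) ((hI (t-1) (by omega)).mul_const _),
        integral_mul_const, integral_mul_const]
    rw [hsplit, hE t htT, hE (t-1) (by omega)]
    have hc : (((t-1 : ℕ)):ℝ) = (t:ℝ) - 1 := by
      push_cast [ht1]
      ring
    rw [hc]
    have hτ : (1:ℝ) ≤ (t:ℝ) := Nat.one_le_cast.mpr ht1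
    linear_combination algebra_key α β hα hβ (y₀:ℝ) (t:ℝ) hτ
end

section
/- In the AR(2) conditional Poisson model with mixing weight s ∈ [0,1], the conditional mean E[y_{t_0+m} | y_{t_0+m-1}, y_{t_0+m-2}] = s·y_{t_0+m-1}((m-1)α+1)^β/(mα+1)^β + (1-s)·y_{t_0+m-2}((m-2)α+1)^β/(mα+1)^β satisfies, by induction on m using the tower property: E[y_{t_0+m} | y_{t_0}] = y_{t_0}/(mα+1)^β for all m ≥ 1. -/
/-- AR(2) conditional Poisson model with mixing weight `s ∈ [0,1]`: the
conditional means `e m = E[y_{t₀+m} | y_{t₀}]` satisfy `e 0 = y₀`,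
`e 1 = y₀/(α+1)^β`, and for `m ≥ 2` (by the tower property applied to the
mixed conditional mean)
`e m = s·e (m-1)·((m-1)α+1)^β/(mα+1)^β + (1-s)·e (m-2)·((m-2)α+1)^β/(mα+1)^β`.
Then `E[y_{t₀+m} | y_{t₀}] = y₀/(mα+1)^β` for every `m ≥ 1`. -/
theorem stmt_19 (α β s : ℝ) (hα : 0 < α) (hβ : 0 < β)
    (hs0 : 0 ≤ s) (hs1 : s ≤ 1) (y₀ : ℕ)
    (e : ℕ → ℝ) (h0 : e 0 = y₀)
    (h1 : e 1 = (y₀ : ℝ) / (α + 1) ^ β)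
    (hrec : ∀ m : ℕ, 2 ≤ m →
      e m = s * e (m - 1) * (((m : ℝ) - 1) * α + 1) ^ β / ((m : ℝ) * α + 1) ^ β
        + (1 - s) * e (m - 2) * (((m : ℝ) - 2) * α + 1) ^ β / ((m : ℝ) * α + 1) ^ β) :
    ∀ m : ℕ, 1 ≤ m → e m = (y₀ : ℝ) / ((m : ℝ) * α + 1) ^ β := by
  have key : ∀ m : ℕ, e m = (y₀ : ℝ) / ((m : ℝ) * α + 1) ^ β := by
    intro m
    induction m using Nat.strong_induction_on with
    | _ m ih =>
      match m with
      | 0 => simpa using h0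
      | 1 => simpa using h1
      | (k + 2) =>
        have h2 : 2 ≤ k + 2 := by omega
        have hrk := hrec (k + 2) h2
        have e1 : e (k + 2 - 1) = (y₀ : ℝ) / (((k + 1 : ℕ) : ℝ) * α + 1) ^ β := by
          simpa using ih (k + 1) (by omega)
        have e2 : e (k + 2 - 2) = (y₀ : ℝ) / (((k : ℕ) : ℝ) * α + 1) ^ β := by
          simpa using ih k (by omega)
        have c1 : (((k + 2 : ℕ) : ℝ) - 1) = ((k + 1 : ℕ) : ℝ) := by push_cast; ring
        have c2 : (((k + 2 : ℕ) : ℝ) - 2) = ((k : ℕ) : ℝ) := by push_cast; ring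
        have p1 : (0 : ℝ) < (((k + 1 : ℕ) : ℝ) * α + 1) ^ β := by
          apply Real.rpow_pos_of_pos; positivity
        have p2 : (0 : ℝ) < (((k : ℕ) : ℝ) * α + 1) ^ β := by
          apply Real.rpow_pos_of_pos; positivity
        rw [hrk, e1, e2, c1, c2]
        field_simp
        ring
  intro m _
  exact key m
end
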